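/- arXiv:2010.02009 — 2 statements merged into one kernel-verified Lean document; each statement's English description precedes it below -/
import Mathlib

section
/- Let G be a locally finite connected weighted graph and x ≠ y vertices. Then the Ollivier Ricci curvature satisfies κ(x,y) = inf{ ∇_{xy} ℒf : f ∈ Lip(1), ∇_{xy} f = 1 } where ∇_{xy} f = (f(x) − f(y))/d(x,y); moreover, restricted to f as above, if the vertices x ∼ y are not contained in any 3-, 4-, or 5-cycle, then κ(x,y) = 2b(x,y)(1/m(x) + 1/m(y)) − Deg(x) − Deg(y). -/
noncomputable def lap {X : Type*} (b : X → X → ℝ) (m : X → ℝ) (f : X → ℝ) (x : X) : ℝ :=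
  (1 / m x) * ∑' y, b x y * (f x - f y)

noncomputable def deg {X : Type*} (b : X → X → ℝ) (m : X → ℝ) (x : X) : ℝ :=
  (1 / m x) * ∑' y, b x y

def HasPathLen {X : Type*} (b : X → X → ℝ) (x y : X) (n : ℕ) : Prop :=
  ∃ p : ℕ → X, p 0 = x ∧ p n = y ∧ ∀ i < n, 0 < b (p i) (p (i + 1))

/-- Combinatorial graph distance. -/
noncomputable def cdist {X : Type*} (b : X → X → ℝ) (x y : X) : ℕ :=
  sInf {n | HasPathLen b x y n}

/-- `f` is 1-Lipschitz with respect to the combinatorial graph distance. -/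
def Lip1 {X : Type*} (b : X → X → ℝ) (f : X → ℝ) : Prop :=
  ∀ x y, |f x - f y| ≤ (cdist b x y : ℝ)

/-- Ollivier Ricci curvature via the dual formula:
`κ(x,y) = inf { ∇_{xy} ℒf : f ∈ Lip(1), ∇_{xy} f = 1 }`. -/
noncomputable def kappa {X : Type*} (b : X → X → ℝ) (m : X → ℝ) (x y : X) : ℝ :=
  sInf {t : ℝ | ∃ f : X → ℝ, Lip1 b f ∧ (f x - f y) / (cdist b x y : ℝ) = 1 ∧
    t = (lap b m f x - lap b m f y) / (cdist b x y : ℝ)}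

section helpers
variable {X : Type*} {b : X → X → ℝ}

lemma hasPathLen_refl (x : X) : HasPathLen b x x 0 := ⟨fun _ => x, rfl, rfl, by omega⟩

lemma hasPathLen_edge {x y : X} (h : 0 < b x y) : HasPathLen b x y 1 := by
  refine ⟨fun i => if i = 0 then x else y, by simp, by simp, ?_⟩
  intro i hi
  interval_cases i
  simpa using h

lemma cdist_self (x : X) : cdist b x x = 0 :=
  Nat.sInf_eq_zero.mpr (Or.inl (hasPathLen_refl x))

lemma cdist_le_one {x y : X} (h : 0 < b x y) : cdist b x y ≤ 1 :=
  Nat.sInf_le (hasPathLen_edge h)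

lemma hasPathLen_cdist {x y : X} (h : ∃ n, HasPathLen b x y n) :
    HasPathLen b x y (cdist b x y) := Nat.sInf_mem h

lemma cdist_pos {x y : X} (h : ∃ n, HasPathLen b x y n) (hxy : x ≠ y) : 0 < cdist b x y := by
  rcases Nat.eq_zero_or_pos (cdist b x y) with h0 | hp
  · exfalso
    have hc := hasPathLen_cdist h
    rw [h0] at hc
    obtain ⟨p, h1, h2, _⟩ := hc
    exact hxy (h1 ▸ h2 ▸ rfl)
  · exact hp

lemma cdist_eq_one {x y : X} (hxy : x ≠ y) (h : 0 < b x y) : cdist b x y = 1 :=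
  le_antisymm (cdist_le_one h) (cdist_pos ⟨1, hasPathLen_edge h⟩ hxy)

lemma hasPathLen_symm (hb : ∀ x y, b x y = b y x) {x y : X} {n : ℕ}
    (h : HasPathLen b x y n) : HasPathLen b y x n := by
  obtain ⟨p, h0, hn, he⟩ := h
  refine ⟨fun i => p (n - i), by simpa, by simpa, ?_⟩
  intro i hi
  show 0 < b (p (n - i)) (p (n - (i + 1)))
  have h1 : n - i = (n - (i + 1)) + 1 := by omega
  rw [h1, hb]
  exact he _ (by omega)

lemma cdist_symm (hb : ∀ x y, b x y = b y x) (x y : X) : cdist b x y = cdist b y x := by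
  unfold cdist
  congr 1
  ext n
  exact ⟨fun h => hasPathLen_symm hb h, fun h => hasPathLen_symm hb h⟩

lemma hasPathLen_trans {x y z : X} {m n : ℕ} (h1 : HasPathLen b x y m)
    (h2 : HasPathLen b y z n) : HasPathLen b x z (m + n) := by
  obtain ⟨p, hp0, hpm, hpe⟩ := h1
  obtain ⟨q, hq0, hqn, hqe⟩ := h2
  refine ⟨fun i => if i ≤ m then p i else q (i - m), by simp [hp0], ?_, ?_⟩
  · by_cases h : m + n ≤ m
    · obtain rfl : n = 0 := by omega
      show (if m + 0 ≤ m then p (m + 0) else q (m + 0 - m)) = z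
      rw [if_pos (by omega), Nat.add_zero, hpm, ← hq0]
      exact hqn
    · simp only [if_neg h]
      rw [show m + n - m = n by omega, hqn]
  · intro i hi
    by_cases hi1 : i + 1 ≤ m
    · simp only [if_pos (by omega : i ≤ m), if_pos hi1]
      exact hpe i (by omega)
    · by_cases hi2 : i ≤ m
      · have him : i = m := by omega
        simp only [if_pos hi2, if_neg hi1]
        rw [him, hpm, ← hq0, show m + 1 - m = 1 from by omega]
        exact hqe 0 (by omega)
      · simp only [if_neg hi2, if_neg (by omega : ¬ i + 1 ≤ m)]
        rw [show i + 1 - m = (i - m) + 1 by omega]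
        exact hqe (i - m) (by omega)

lemma cdist_triangle (hconn : ∀ x y : X, ∃ n, HasPathLen b x y n) (x y z : X) :
    cdist b x z ≤ cdist b x y + cdist b y z :=
  Nat.sInf_le (hasPathLen_trans (hasPathLen_cdist (hconn x y)) (hasPathLen_cdist (hconn y z)))

lemma two_le_cdist (hconn : ∀ x y : X, ∃ n, HasPathLen b x y n) {x y : X}
    (hxy : x ≠ y) (hne : ¬ 0 < b x y) : 2 ≤ cdist b x y := by
  by_contra h
  push_neg at h
  have hc := hasPathLen_cdist (hconn x y)
  interval_cases hh : (cdist b x y)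
  · obtain ⟨p, h1, h2, _⟩ := hc; exact hxy (h1 ▸ h2 ▸ rfl)
  · obtain ⟨p, h1, h2, he⟩ := hc
    exact hne (h1 ▸ h2 ▸ he 0 (by omega))

lemma three_le_cdist (hconn : ∀ x y : X, ∃ n, HasPathLen b x y n) {x y : X}
    (hxy : x ≠ y) (hne : ¬ 0 < b x y) (hmid : ∀ w, ¬(0 < b x w ∧ 0 < b w y)) :
    3 ≤ cdist b x y := by
  by_contra h
  push_neg at h
  have h2 := two_le_cdist hconn hxy hne
  have hh : cdist b x y = 2 := by omega
  have hc := hasPathLen_cdist (hconn x y)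
  rw [hh] at hc
  obtain ⟨p, h1, h2', he⟩ := hc
  exact hmid (p 1) ⟨h1 ▸ he 0 (by omega), h2' ▸ he 1 (by omega)⟩

end helpers

lemma exists_inj_path2 {X : Type*} {b : X → X → ℝ} {x z y : X}
    (h1 : x ≠ z) (h2 : x ≠ y) (h3 : z ≠ y) (e1 : 0 < b x z) (e2 : 0 < b z y) :
    ∃ p : ℕ → X, p 0 = x ∧ p 2 = y ∧ (∀ i < 2, 0 < b (p i) (p (i + 1))) ∧
      ∀ i j, i ≤ 2 → j ≤ 2 → p i = p j → i = j := by
  refine ⟨fun i => if i = 0 then x else if i = 1 then z else y, by simp, by simp, ?_, ?_⟩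
  · intro i hi; interval_cases i <;> simpa
  · intro i j hi hj hij
    interval_cases i <;> interval_cases j <;> simp_all

lemma exists_inj_path3 {X : Type*} {b : X → X → ℝ} {x z w y : X}
    (hxz : x ≠ z) (hxw : x ≠ w) (hxy : x ≠ y) (hzw : z ≠ w) (hzy : z ≠ y) (hwy : w ≠ y)
    (e1 : 0 < b x z) (e2 : 0 < b z w) (e3 : 0 < b w y) :
    ∃ p : ℕ → X, p 0 = x ∧ p 3 = y ∧ (∀ i < 3, 0 < b (p i) (p (i + 1))) ∧
      ∀ i j, i ≤ 3 → j ≤ 3 → p i = p j → i = j := by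
  refine ⟨fun i => if i = 0 then x else if i = 1 then z else if i = 2 then w else y,
    by simp, by simp, ?_, ?_⟩
  · intro i hi; interval_cases i <;> simpa
  · intro i j hi hj hij
    interval_cases i <;> interval_cases j <;> simp_all

lemma exists_inj_path4 {X : Type*} {b : X → X → ℝ} {x z u w y : X}
    (hxz : x ≠ z) (hxu : x ≠ u) (hxw : x ≠ w) (hxy : x ≠ y) (hzu : z ≠ u) (hzw : z ≠ w)
    (hzy : z ≠ y) (huw : u ≠ w) (huy : u ≠ y) (hwy : w ≠ y)
    (e1 : 0 < b x z) (e2 : 0 < b z u) (e3 : 0 < b u w) (e4 : 0 < b w y) :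
    ∃ p : ℕ → X, p 0 = x ∧ p 4 = y ∧ (∀ i < 4, 0 < b (p i) (p (i + 1))) ∧
      ∀ i j, i ≤ 4 → j ≤ 4 → p i = p j → i = j := by
  refine ⟨fun i => if i = 0 then x else if i = 1 then z else if i = 2 then u
    else if i = 3 then w else y, by simp, by simp, ?_, ?_⟩
  · intro i hi; interval_cases i <;> simpa
  · intro i j hi hj hij
    interval_cases i <;> interval_cases j <;> simp_all


/-- If the edge `x ∼ y` is not contained in any 3-, 4-, or 5-cycle, then the Ollivier
Ricci curvature is `κ(x,y) = 2b(x,y)(1/m(x)+1/m(y)) − Deg(x) − Deg(y)`. -/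
theorem kappa_no_short_cycles {X : Type*} (b : X → X → ℝ) (m : X → ℝ)
    (hb_symm : ∀ x y, b x y = b y x) (hb_nonneg : ∀ x y, 0 ≤ b x y)
    (hb_diag : ∀ x, b x x = 0) (hb_sum : ∀ x, Summable fun y => b x y)
    (hm : ∀ x, 0 < m x)
    (hloc : ∀ x : X, {y | 0 < b x y}.Finite)
    (hconn : ∀ x y : X, ∃ n, HasPathLen b x y n)
    (x y : X) (hxy : x ≠ y) (hedge : 0 < b x y)
    -- no cycle of length 3, 4 or 5 contains the edge `x ∼ y`, i.e. there is no injective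
    -- path from `x` to `y` of length 2, 3 or 4:
    (hnocycle : ∀ L : ℕ, 2 ≤ L → L ≤ 4 → ¬ ∃ p : ℕ → X, p 0 = x ∧ p L = y ∧
      (∀ i < L, 0 < b (p i) (p (i + 1))) ∧
      ∀ i j, i ≤ L → j ≤ L → p i = p j → i = j) :
    kappa b m x y = 2 * b x y * (1 / m x + 1 / m y) - deg b m x - deg b m y := by
  classical
  have hdxy : cdist b x y = 1 := cdist_eq_one hxy hedge
  -- no-short-cycle consequences
  have hdisj : ∀ z, 0 < b x z → 0 < b y z → False := by
    intro z hxz hyz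
    have hzx : z ≠ x := fun h => by rw [h, hb_diag] at hxz; exact lt_irrefl 0 hxz
    have hzy : z ≠ y := fun h => by rw [h, hb_diag] at hyz; exact lt_irrefl 0 hyz
    exact hnocycle 2 le_rfl (by omega)
      (exists_inj_path2 (Ne.symm hzx) hxy hzy hxz (by rw [hb_symm]; exact hyz))
  have hno3 : ∀ z w, 0 < b x z → z ≠ y → 0 < b y w → w ≠ x → 0 < b z w → False := by
    intro z w hxz hzy hyw hwx hzw
    have hzx : z ≠ x := fun h => by rw [h, hb_diag] at hxz; exact lt_irrefl 0 hxz
    have hwy : w ≠ y := fun h => by rw [h, hb_diag] at hyw; exact lt_irrefl 0 hyw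
    have hzw' : z ≠ w := fun h => hdisj z hxz (by rw [h]; exact hyw)
    exact hnocycle 3 (by omega) (by omega)
      (exists_inj_path3 (Ne.symm hzx) (Ne.symm hwx) hxy hzw' hzy hwy hxz hzw
        (by rw [hb_symm]; exact hyw))
  have hno4 : ∀ z u w, 0 < b x z → z ≠ y → 0 < b y w → w ≠ x → 0 < b z u → 0 < b u w →
      False := by
    intro z u w hxz hzy hyw hwx hzu huw
    have hzx : z ≠ x := fun h => by rw [h, hb_diag] at hxz; exact lt_irrefl 0 hxz
    have hwy : w ≠ y := fun h => by rw [h, hb_diag] at hyw; exact lt_irrefl 0 hyw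
    have hzw : z ≠ w := fun h => hdisj z hxz (by rw [h]; exact hyw)
    have huz : u ≠ z := fun h => by rw [h, hb_diag] at hzu; exact lt_irrefl 0 hzu
    have huw' : u ≠ w := fun h => by rw [h, hb_diag] at huw; exact lt_irrefl 0 huw
    have hux : u ≠ x := fun h => hdisj w (by rw [← h]; exact huw) hyw
    have huy : u ≠ y := fun h => hdisj z hxz (by rw [← h, hb_symm]; exact hzu)
    exact hnocycle 4 (by omega) le_rfl
      (exists_inj_path4 (Ne.symm hzx) (Ne.symm hux) (Ne.symm hwx) hxy (Ne.symm huz) hzw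
        hzy huw' huy hwy hxz hzu huw (by rw [hb_symm]; exact hyw))
  -- finite neighborhoods
  set sx := (hloc x).toFinset with hsx_def
  set sy := (hloc y).toFinset with hsy_def
  have hmemx : ∀ z, z ∈ sx ↔ 0 < b x z := fun z => (hloc x).mem_toFinset
  have hmemy : ∀ z, z ∈ sy ↔ 0 < b y z := fun z => (hloc y).mem_toFinset
  have hyx : y ∈ sx := (hmemx y).mpr hedge
  have hxsy : x ∈ sy := (hmemy x).mpr (by rw [hb_symm y x]; exact hedge)
  -- tsum = finite sum
  have htsum : ∀ (u : X) (h : X → ℝ),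
      ∑' z, b u z * h z = ∑ z ∈ (hloc u).toFinset, b u z * h z := by
    intro u h
    apply tsum_eq_sum
    intro z hz
    have hb0 : b u z = 0 :=
      le_antisymm (not_lt.mp fun h' => hz ((hloc u).mem_toFinset.mpr h')) (hb_nonneg u z)
    rw [hb0, zero_mul]
  have hdeg : ∀ u : X, deg b m u = (1 / m u) * ∑ z ∈ (hloc u).toFinset, b u z := by
    intro u
    unfold deg
    congr 1
    apply tsum_eq_sum
    intro z hz
    exact le_antisymm (not_lt.mp fun h' => hz ((hloc u).mem_toFinset.mpr h')) (hb_nonneg u z)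
  have hlap : ∀ (f : X → ℝ) (u : X),
      lap b m f u = (1 / m u) * ∑ z ∈ (hloc u).toFinset, b u z * (f u - f z) := by
    intro f u
    unfold lap
    rw [htsum u (fun z => f u - f z)]
  -- cast distance facts
  have h0le : ∀ u v : X, (0:ℝ) ≤ (cdist b u v : ℝ) := fun u v => Nat.cast_nonneg _
  have h1le : ∀ u v : X, u ≠ v → (1:ℝ) ≤ (cdist b u v : ℝ) := by
    intro u v h
    exact_mod_cast cdist_pos (hconn u v) h
  have h2le : ∀ u v : X, u ≠ v → ¬ 0 < b u v → (2:ℝ) ≤ (cdist b u v : ℝ) := by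
    intro u v h h'
    exact_mod_cast two_le_cdist hconn h h'
  have h3le : ∀ u v : X, u ≠ v → ¬ 0 < b u v → (∀ w, ¬(0 < b u w ∧ 0 < b w v)) →
      (3:ℝ) ≤ (cdist b u v : ℝ) := by
    intro u v h h' h''
    exact_mod_cast three_le_cdist hconn h h' h''
  -- lower bound: any competitor is ≥ the claimed value
  have hlow : ∀ f : X → ℝ, Lip1 b f → f x - f y = 1 →
      2 * b x y * (1 / m x + 1 / m y) - deg b m x - deg b m y ≤
        lap b m f x - lap b m f y := by
    intro f hf hfxy
    have hx1 : 2 * b x y - ∑ z ∈ sx, b x z ≤ ∑ z ∈ sx, b x z * (f x - f z) := by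
      have hterm : ∀ z ∈ sx.erase y, -(b x z) ≤ b x z * (f x - f z) := by
        intro z hz
        have hbz : 0 < b x z := (hmemx z).mp (Finset.mem_of_mem_erase hz)
        have habs : |f x - f z| ≤ 1 := by
          have h1 := hf x z
          have hcd : (cdist b x z : ℝ) ≤ 1 := by exact_mod_cast cdist_le_one hbz
          linarith
        nlinarith [abs_le.mp habs]
      have h1 : ∑ z ∈ sx.erase y, -(b x z) ≤ ∑ z ∈ sx.erase y, b x z * (f x - f z) :=
        Finset.sum_le_sum hterm
      have h2 : ∑ z ∈ sx.erase y, -(b x z) = -∑ z ∈ sx.erase y, b x z := by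
        simp
      have hEx : b x y + ∑ z ∈ sx.erase y, b x z = ∑ z ∈ sx, b x z :=
        Finset.add_sum_erase _ _ hyx
      have hEx2 : b x y * (f x - f y) + ∑ z ∈ sx.erase y, b x z * (f x - f z) =
          ∑ z ∈ sx, b x z * (f x - f z) :=
        Finset.add_sum_erase _ (fun z => b x z * (f x - f z)) hyx
      rw [hfxy] at hEx2
      linarith
    have hy1 : ∑ z ∈ sy, b y z * (f y - f z) ≤ ∑ z ∈ sy, b y z - 2 * b x y := by
      have hterm : ∀ z ∈ sy.erase x, b y z * (f y - f z) ≤ b y z := by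
        intro z hz
        have hbz : 0 < b y z := (hmemy z).mp (Finset.mem_of_mem_erase hz)
        have habs : |f y - f z| ≤ 1 := by
          have h1 := hf y z
          have hcd : (cdist b y z : ℝ) ≤ 1 := by exact_mod_cast cdist_le_one hbz
          linarith
        nlinarith [abs_le.mp habs]
      have h1 : ∑ z ∈ sy.erase x, b y z * (f y - f z) ≤ ∑ z ∈ sy.erase x, b y z :=
        Finset.sum_le_sum hterm
      have hEy : b y x + ∑ z ∈ sy.erase x, b y z = ∑ z ∈ sy, b y z :=
        Finset.add_sum_erase _ _ hxsy
      have hEy2 : b y x * (f y - f x) + ∑ z ∈ sy.erase x, b y z * (f y - f z) =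
          ∑ z ∈ sy, b y z * (f y - f z) :=
        Finset.add_sum_erase _ (fun z => b y z * (f y - f z)) hxsy
      have hsymm : b y x = b x y := (hb_symm y x)
      have hfyx : f y - f x = -1 := by linarith
      rw [hfyx, hsymm] at hEy2
      rw [hsymm] at hEy
      linarith
    have hmx : (0:ℝ) < 1 / m x := one_div_pos.mpr (hm x)
    have hmy : (0:ℝ) < 1 / m y := one_div_pos.mpr (hm y)
    have A := mul_le_mul_of_nonneg_left hx1 hmx.le
    have B := mul_le_mul_of_nonneg_left hy1 hmy.le
    rw [hlap f x, hlap f y, hdeg x, hdeg y, ← hsx_def, ← hsy_def]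
    nlinarith [A, B]
  -- the optimal function
  set S : Finset X := insert x (sx ∪ sy) with hS_def
  have hxS : x ∈ S := Finset.mem_insert_self _ _
  have hSne : S.Nonempty := ⟨x, hxS⟩
  set g : X → ℝ := fun v => if v = x then 1 else if v = y then 0
    else if 0 < b x v then 2 else -1 with hg_def
  have gx : g x = 1 := by simp [hg_def]
  have gy : g y = 0 := by simp [hg_def, Ne.symm hxy]
  have gC : ∀ v, v ≠ x → v ≠ y → 0 < b x v → g v = 2 := by
    intro v h1 h2 h3; simp [hg_def, h1, h2, h3]
  have gD : ∀ v, v ≠ x → v ≠ y → ¬ 0 < b x v → g v = -1 := by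
    intro v h1 h2 h3; simp [hg_def, h1, h2, h3]
  have hclass : ∀ v ∈ S, v = x ∨ v = y ∨ (0 < b x v ∧ v ≠ x ∧ v ≠ y) ∨
      (0 < b y v ∧ ¬ 0 < b x v ∧ v ≠ x ∧ v ≠ y) := by
    intro v hv
    by_cases h1 : v = x
    · exact Or.inl h1
    by_cases h2 : v = y
    · exact Or.inr (Or.inl h2)
    by_cases h3 : 0 < b x v
    · exact Or.inr (Or.inr (Or.inl ⟨h3, h1, h2⟩))
    · refine Or.inr (Or.inr (Or.inr ⟨?_, h3, h1, h2⟩))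
      rcases Finset.mem_insert.mp hv with h | h
      · exact absurd h h1
      rcases Finset.mem_union.mp h with h | h
      · exact absurd ((hmemx v).mp h) h3
      · exact (hmemy v).mp h
  have hgLip : ∀ s ∈ S, ∀ t ∈ S, g s - g t ≤ (cdist b t s : ℝ) := by
    intro s hs t ht
    rcases hclass s hs with hes | hes | ⟨hs1, hs2, hs3⟩ | ⟨hs1, hs2, hs3, hs4⟩ <;>
      rcases hclass t ht with het | het | ⟨ht1, ht2, ht3⟩ | ⟨ht1, ht2, ht3, ht4⟩
    · rw [hes, het, gx, cdist_self]; norm_num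
    · rw [hes, het, gx, gy]
      linarith [h1le y x (Ne.symm hxy)]
    · rw [hes, gx, gC t ht2 ht3 ht1]
      linarith [h0le t x]
    · rw [hes, gx, gD t ht3 ht4 ht2]
      have h2 : (2:ℝ) ≤ (cdist b t x : ℝ) := by
        refine h2le t x ht3 fun h => hdisj t ?_ ht1
        rw [hb_symm x t]; exact h
      linarith
    · rw [hes, het, gy, gx]
      linarith [h0le x y]
    · rw [hes, het, gy, cdist_self]; norm_num
    · rw [hes, gy, gC t ht2 ht3 ht1]
      linarith [h0le t y]
    · rw [hes, gy, gD t ht3 ht4 ht2]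
      linarith [h1le t y ht4]
    · rw [het, gC s hs2 hs3 hs1, gx]
      linarith [h1le x s (Ne.symm hs2)]
    · rw [het, gC s hs2 hs3 hs1, gy]
      have h2 : (2:ℝ) ≤ (cdist b y s : ℝ) := h2le y s (Ne.symm hs3) fun h => hdisj s hs1 h
      linarith
    · rw [gC s hs2 hs3 hs1, gC t ht2 ht3 ht1]
      linarith [h0le t s]
    · rw [gC s hs2 hs3 hs1, gD t ht3 ht4 ht2]
      have hts : t ≠ s := fun h => hdisj s hs1 (by rw [← h]; exact ht1)
      have hnedge : ¬ 0 < b t s := fun h =>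
        hno3 s t hs1 hs3 ht1 ht3 (by rw [hb_symm s t]; exact h)
      have hnmid : ∀ w, ¬(0 < b t w ∧ 0 < b w s) := by
        rintro w ⟨hh1, hh2⟩
        exact hno4 s w t hs1 hs3 ht1 ht3 (by rw [hb_symm s w]; exact hh2)
          (by rw [hb_symm w t]; exact hh1)
      have h3 : (3:ℝ) ≤ (cdist b t s : ℝ) := h3le t s hts hnedge hnmid
      linarith
    · rw [het, gD s hs3 hs4 hs2, gx]
      linarith [h0le x s]
    · rw [het, gD s hs3 hs4 hs2, gy]
      linarith [h0le y s]
    · rw [gD s hs3 hs4 hs2, gC t ht2 ht3 ht1]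
      linarith [h0le t s]
    · rw [gD s hs3 hs4 hs2, gD t ht3 ht4 ht2]
      linarith [h0le t s]
  set F : X → ℝ := fun v => S.inf' hSne (fun s => g s + (cdist b s v : ℝ)) with hF_def
  have hF_le : ∀ u v : X, F u - F v ≤ (cdist b v u : ℝ) := by
    intro u v
    obtain ⟨s, hsS, hs_eq⟩ :=
      Finset.exists_mem_eq_inf' hSne (fun s => g s + (cdist b s v : ℝ))
    have h1 : F u ≤ g s + (cdist b s u : ℝ) := Finset.inf'_le _ hsS
    have h2 : (cdist b s u : ℝ) ≤ (cdist b s v : ℝ) + (cdist b v u : ℝ) := by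
      exact_mod_cast cdist_triangle hconn s v u
    have h3 : F v = g s + (cdist b s v : ℝ) := hs_eq
    linarith
  have hFlip : Lip1 b F := by
    intro u v
    rw [abs_sub_le_iff]
    constructor
    · have := hF_le u v
      rwa [cdist_symm hb_symm v u] at this
    · exact hF_le v u
  have hF_eq : ∀ s ∈ S, F s = g s := by
    intro s hs
    apply le_antisymm
    · have h1 : F s ≤ g s + (cdist b s s : ℝ) := Finset.inf'_le _ hs
      simpa [cdist_self] using h1
    · apply Finset.le_inf'
      intro t ht
      have := hgLip s hs t ht
      linarith
  have hFx : F x = 1 := by rw [hF_eq x hxS, gx]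
  have hFy : F y = 0 := by
    rw [hF_eq y (Finset.mem_insert_of_mem (Finset.mem_union_left _ hyx)), gy]
  -- exact value of the laplacians for F
  have hSxF : ∑ z ∈ sx, b x z * (F x - F z) = 2 * b x y - ∑ z ∈ sx, b x z := by
    have hterm : ∀ z ∈ sx.erase y, b x z * (F x - F z) = -(b x z) := by
      intro z hz
      have hzy : z ≠ y := Finset.ne_of_mem_erase hz
      have hzsx : z ∈ sx := Finset.mem_of_mem_erase hz
      have hbz : 0 < b x z := (hmemx z).mp hzsx
      have hzx : z ≠ x := fun h => by rw [h, hb_diag] at hbz; exact lt_irrefl 0 hbz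
      have hzS : z ∈ S := Finset.mem_insert_of_mem (Finset.mem_union_left _ hzsx)
      rw [hF_eq z hzS, gC z hzx hzy hbz, hFx]
      ring
    have h1 : ∑ z ∈ sx.erase y, b x z * (F x - F z) = -∑ z ∈ sx.erase y, b x z := by
      rw [Finset.sum_congr rfl hterm]
      simp
    have hEx : b x y + ∑ z ∈ sx.erase y, b x z = ∑ z ∈ sx, b x z :=
      Finset.add_sum_erase _ _ hyx
    have hEx2 : b x y * (F x - F y) + ∑ z ∈ sx.erase y, b x z * (F x - F z) =
        ∑ z ∈ sx, b x z * (F x - F z) :=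
      Finset.add_sum_erase _ (fun z => b x z * (F x - F z)) hyx
    rw [← hEx2, h1, hFx, hFy, ← hEx]
    ring
  have hSyF : ∑ z ∈ sy, b y z * (F y - F z) = ∑ z ∈ sy, b y z - 2 * b x y := by
    have hterm : ∀ z ∈ sy.erase x, b y z * (F y - F z) = b y z := by
      intro z hz
      have hzx : z ≠ x := Finset.ne_of_mem_erase hz
      have hzsy : z ∈ sy := Finset.mem_of_mem_erase hz
      have hbz : 0 < b y z := (hmemy z).mp hzsy
      have hzy : z ≠ y := fun h => by rw [h, hb_diag] at hbz; exact lt_irrefl 0 hbz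
      have hnbx : ¬ 0 < b x z := fun h => hdisj z h hbz
      have hzS : z ∈ S := Finset.mem_insert_of_mem (Finset.mem_union_right _ hzsy)
      rw [hF_eq z hzS, gD z hzx hzy hnbx, hFy]
      ring
    have h1 : ∑ z ∈ sy.erase x, b y z * (F y - F z) = ∑ z ∈ sy.erase x, b y z :=
      Finset.sum_congr rfl hterm
    have hEy : b y x + ∑ z ∈ sy.erase x, b y z = ∑ z ∈ sy, b y z :=
      Finset.add_sum_erase _ _ hxsy
    have hEy2 : b y x * (F y - F x) + ∑ z ∈ sy.erase x, b y z * (F y - F z) =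
        ∑ z ∈ sy, b y z * (F y - F z) :=
      Finset.add_sum_erase _ (fun z => b y z * (F y - F z)) hxsy
    rw [← hEy2, h1, hFx, hFy, ← hEy, hb_symm y x]
    ring
  have hval : lap b m F x - lap b m F y =
      2 * b x y * (1 / m x + 1 / m y) - deg b m x - deg b m y := by
    rw [hlap F x, hlap F y, hdeg x, hdeg y, ← hsx_def, ← hsy_def, hSxF, hSyF]
    ring
  -- membership
  have hmem : 2 * b x y * (1 / m x + 1 / m y) - deg b m x - deg b m y ∈
      {t : ℝ | ∃ f : X → ℝ, Lip1 b f ∧ (f x - f y) / (cdist b x y : ℝ) = 1 ∧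
        t = (lap b m f x - lap b m f y) / (cdist b x y : ℝ)} := by
    refine ⟨F, hFlip, ?_, ?_⟩
    · rw [hdxy, hFx, hFy]
      norm_num
    · rw [hdxy, hval]
      norm_num
  have hbdd : ∀ t ∈ {t : ℝ | ∃ f : X → ℝ, Lip1 b f ∧ (f x - f y) / (cdist b x y : ℝ) = 1 ∧
      t = (lap b m f x - lap b m f y) / (cdist b x y : ℝ)},
      2 * b x y * (1 / m x + 1 / m y) - deg b m x - deg b m y ≤ t := by
    rintro t ⟨f, hf, hf1, rfl⟩
    rw [hdxy] at hf1 ⊢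
    rw [Nat.cast_one, div_one] at hf1 ⊢
    exact hlow f hf hf1
  unfold kappa
  exact le_antisymm (csInf_le ⟨_, hbdd⟩ hmem) (le_csInf ⟨_, hmem⟩ hbdd)
end

section
/- Let G be a birth-death chain (X = ℕ₀, x ∼ y iff |x−y| = 1) with ρ(k) = k, sphere curvature κ(r) = κ(r−1, r), and Deg(0) = b(0,1)/m(0). Then equality holds in the Laplacian comparison: ℒρ(k) = ∑_{j=1}^{k} κ(j) − Deg(0) for all k ∈ ℕ₀. -/
noncomputable def bdLap (β m : ℕ → ℝ) (f : ℕ → ℝ) (k : ℕ) : ℝ :=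
  (1 / m k) * (β k * (f k - f (k + 1)) +
    (if k = 0 then 0 else β (k - 1) * (f k - f (k - 1))))

def BdLip1 (f : ℕ → ℝ) : Prop := ∀ j k : ℕ, |f j - f k| ≤ |(j : ℝ) - (k : ℝ)|

/-- Ollivier Ricci curvature of a birth-death chain via the dual formula. -/
noncomputable def bdKappa (β m : ℕ → ℝ) (j k : ℕ) : ℝ :=
  sInf {t : ℝ | ∃ f : ℕ → ℝ, BdLip1 f ∧ (f j - f k) / ((k : ℝ) - (j : ℝ)) = 1 ∧
    t = (bdLap β m f j - bdLap β m f k) / ((k : ℝ) - (j : ℝ))}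

/-!
Among the 1-Lipschitz `f` with `f i - f (i + 1) = 1`, the function `-ρ` minimises
`ℒf(i) - ℒf(i + 1)`: the Laplacian at a vertex is monotone in the differences of `f` along the
edges there, the edge `(i, i + 1)` is pinned, and `-ρ` saturates the Lipschitz bounds on the two
outer edges `(i - 1, i)` and `(i + 1, i + 2)`. Hence `κ(i, i + 1) = ℒρ(i + 1) - ℒρ(i)`, and the
sphere curvatures telescope to `ℒρ(k) - ℒρ(0) = ℒρ(k) + Deg(0)`.
-/

theorem BdLip1.abs_sub_succ_le {f : ℕ → ℝ} (hf : BdLip1 f) (k : ℕ) : |f k - f (k + 1)| ≤ 1 := by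
  simpa using hf k (k + 1)

theorem bdLip1_neg_natCast : BdLip1 (-fun n : ℕ => (n : ℝ)) := fun j k => by
  simp only [Pi.neg_apply, neg_sub_neg]
  exact (abs_sub_comm _ _).le

section

variable {β m : ℕ → ℝ}

theorem bdLap_neg (f : ℕ → ℝ) (k : ℕ) : bdLap β m (-f) k = -bdLap β m f k := by
  simp only [bdLap, Pi.neg_apply]
  split_ifs <;> ring

theorem bdLap_le_bdLap (hβ : ∀ k, 0 ≤ β k) (hm : ∀ k, 0 ≤ m k) {f g : ℕ → ℝ} {k : ℕ}
    (hsucc : g k - g (k + 1) ≤ f k - f (k + 1))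
    (hpred : k ≠ 0 → g k - g (k - 1) ≤ f k - f (k - 1)) :
    bdLap β m g k ≤ bdLap β m f k := by
  refine mul_le_mul_of_nonneg_left
    (add_le_add (mul_le_mul_of_nonneg_left hsucc (hβ k)) ?_) (one_div_nonneg.mpr (hm k))
  split_ifs with hk
  · rfl
  · exact mul_le_mul_of_nonneg_left (hpred hk) (hβ _)

theorem bdLap_neg_natCast_sub_succ_le (hβ : ∀ k, 0 ≤ β k) (hm : ∀ k, 0 ≤ m k) {f : ℕ → ℝ}
    (hf : BdLip1 f) {i : ℕ} (hi : f i - f (i + 1) = 1) :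
    bdLap β m (-fun n : ℕ => (n : ℝ)) i - bdLap β m (-fun n : ℕ => (n : ℝ)) (i + 1) ≤
      bdLap β m f i - bdLap β m f (i + 1) := by
  have hleft : bdLap β m (-fun n : ℕ => (n : ℝ)) i ≤ bdLap β m f i := by
    refine bdLap_le_bdLap hβ hm ?_ fun hi0 => ?_
    · simp only [Pi.neg_apply]
      push_cast
      linarith
    · obtain ⟨j, rfl⟩ := Nat.exists_eq_add_one_of_ne_zero hi0
      have := (abs_le.mp (hf.abs_sub_succ_le j)).2
      simp only [Pi.neg_apply, Nat.add_sub_cancel]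
      push_cast
      linarith
  have hright : bdLap β m f (i + 1) ≤ bdLap β m (-fun n : ℕ => (n : ℝ)) (i + 1) := by
    refine bdLap_le_bdLap hβ hm ?_ fun _ => ?_
    · have := (abs_le.mp (hf.abs_sub_succ_le (i + 1))).2
      simp only [Pi.neg_apply]
      push_cast
      linarith
    · simp only [Pi.neg_apply, Nat.add_sub_cancel]
      push_cast
      linarith
  linarith

theorem bdKappa_self_succ (hβ : ∀ k, 0 ≤ β k) (hm : ∀ k, 0 ≤ m k) (i : ℕ) :
    bdKappa β m i (i + 1) =
      bdLap β m (fun n => (n : ℝ)) (i + 1) - bdLap β m (fun n => (n : ℝ)) i := by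
  have hdist : ((i + 1 : ℕ) : ℝ) - i = 1 := by push_cast; ring
  refine IsLeast.csInf_eq ?_
  simp only [hdist, div_one]
  refine ⟨⟨_, bdLip1_neg_natCast, by simp, by rw [bdLap_neg, bdLap_neg]; ring⟩, ?_⟩
  rintro t ⟨f, hf, hi, rfl⟩
  have := bdLap_neg_natCast_sub_succ_le hβ hm hf hi
  rw [bdLap_neg, bdLap_neg] at this
  linarith

theorem bdLap_natCast_zero : bdLap β m (fun n => (n : ℝ)) 0 = -(β 0 / m 0) := by
  rw [bdLap, if_pos rfl]
  push_cast
  ring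

end

/-- Equality in the Laplacian comparison on birth-death chains:
`ℒρ(k) = ∑_{j=1}^k κ(j−1,j) − Deg(0)` for `ρ(k) = k`, with sphere curvature
`κ(j) = κ(j−1,j)` and `Deg(0) = b(0,1)/m(0)`. -/
theorem bd_laplacian_comparison_eq (β m : ℕ → ℝ) (hβ : ∀ k, 0 < β k) (hm : ∀ k, 0 < m k) :
    ∀ k : ℕ, bdLap β m (fun n => (n : ℝ)) k =
      (∑ j ∈ Finset.Icc 1 k, bdKappa β m (j - 1) j) - β 0 / m 0 := by
  intro k
  induction k with
  | zero => simpa [sub_eq_add_neg] using bdLap_natCast_zero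
  | succ k ih =>
    rw [Finset.sum_Icc_succ_top k.succ_pos, Nat.add_sub_cancel,
      bdKappa_self_succ (fun k => (hβ k).le) (fun k => (hm k).le)]
    linarith
end
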